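/- arXiv:2209.00271 — 3 statements merged into one kernel-verified Lean document; each statement's English description precedes it below -/
import Mathlib

section
/- Let S be a string of length n. Then P[1] = 0, and for every i with 1 < i ≤ n, P[i] = P[i−1] + OC[i]; that is, P[i] − P[i−1] = 1 if S[1..i] is closed and P[i] − P[i−1] = 0 otherwise. -/
variable {α : Type*}

/-- `β` is a border of `S`: a proper (possibly empty) prefix that is also a suffix. -/
def IsBorder (β S : List α) : Prop :=
  β ≠ S ∧ β <+: S ∧ β <:+ S

/-- `v` occurs in `T` at (0-based) position `p`. -/
def OccursAt (v T : List α) (p : ℕ) : Prop :=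
  p + v.length ≤ T.length ∧ v <+: T.drop p

/-- A string is closed if it has length 1 or it has a border with no internal occurrence. -/
def IsClosedWord (S : List α) : Prop :=
  S.length = 1 ∨ ∃ β, IsBorder β S ∧
    ∀ p, OccursAt β S p → p = 0 ∨ p = S.length - β.length

open Classical in
/-- `OCval S i = 1` if the prefix `S[1..i]` is closed, and `0` otherwise. -/
noncomputable def OCval (S : List α) (i : ℕ) : ℕ :=
  if IsClosedWord (S.take i) then 1 else 0

/-- `Parr S i` is the length of the longest prefix of `S[1..i]` having at least
two (possibly overlapping) occurrences in `S[1..i]`. -/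
noncomputable def Parr (S : List α) (i : ℕ) : ℕ :=
  sSup {ℓ | ∃ p q : ℕ, p < q ∧ OccursAt (S.take ℓ) (S.take i) p ∧
    OccursAt (S.take ℓ) (S.take i) q}

/-- `Barr S i` is the length of the longest border of `S[1..i]`. -/
noncomputable def Barr (S : List α) (i : ℕ) : ℕ :=
  sSup {ℓ | IsBorder (S.take ℓ) (S.take i)}

/-- `Bord S i` is the set of lengths of borders of `S[1..i]`. -/
def Bord (S : List α) (i : ℕ) : Set ℕ :=
  {ℓ | IsBorder (S.take ℓ) (S.take i)}

/-- The substring `S[i..j]` (1-based, inclusive). -/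
def Substr (S : List α) (i j : ℕ) : List α :=
  (S.take j).drop (i - 1)

/-- `S[i..j]` is a maximal closed substring of `S`. -/
def IsMCS (S : List α) (i j : ℕ) : Prop :=
  1 ≤ i ∧ i ≤ j ∧ j ≤ S.length ∧ IsClosedWord (Substr S i j) ∧
    (j = S.length ∨ ¬ IsClosedWord (Substr S i (j + 1))) ∧
    (i = 1 ∨ ¬ IsClosedWord (Substr S (i - 1) j))

open Classical in
/-- Number of maximal blocks of consecutive `1`s in the OC array of `S`. -/
noncomputable def ocRuns (S : List α) : ℕ :=
  ((Finset.Icc 1 S.length).filter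
    (fun i => OCval S i = 1 ∧ (i = 1 ∨ OCval S (i - 1) = 0))).card

/-- The OC array of `S` as a list (1-based entries). -/
noncomputable def ocList (S : List α) : List ℕ :=
  (List.range S.length).map (fun j => OCval S (j + 1))

/-!
`P` never decreases and grows by at most one per letter, since cutting the last letter off two
occurrences of a repeated prefix of `S[1..i]` leaves two occurrences in `S[1..i-1]`. It grows exactly
when the longest repeated prefix of `S[1..i]` is new, i.e. one of its occurrences ends at `i`: it is
then a border, and any internal occurrence would already make it repeated in `S[1..i-1]`.
Conversely, a border `β` of `S[1..i]` without internal occurrence is repeated in `S[1..i]`, while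
`β` cannot fit into the repeated prefix of `S[1..i-1]`, whose second occurrence would be internal.
-/

section OccursAt

variable {v w T : List α} {p : ℕ}

lemma List.IsPrefix.occursAt_zero (h : v <+: T) : OccursAt v T 0 :=
  ⟨by simpa using h.length_le, by simpa using h⟩

lemma List.IsSuffix.occursAt (h : v <:+ T) : OccursAt v T (T.length - v.length) := by
  refine ⟨by have := h.length_le; omega, ?_⟩
  rw [← List.suffix_iff_eq_drop.mp h]

lemma OccursAt.of_prefix (hw : w <+: v) (h : OccursAt v T p) : OccursAt w T p :=
  ⟨by have := hw.length_le; have := h.1; omega, hw.trans h.2⟩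

lemma OccursAt.isSuffix_of_add_length_eq (h : OccursAt v T p) (hend : p + v.length = T.length) :
    v <:+ T := by
  rw [h.2.eq_of_length (by simp; omega)]
  exact List.drop_suffix p T

lemma OccursAt.take_mono {S : List α} {j k : ℕ} (hjk : j ≤ k) (h : OccursAt v (S.take j) p) :
    OccursAt v (S.take k) p :=
  have hpre : S.take j <+: S.take k := List.take_prefix_take_left hjk
  ⟨h.1.trans hpre.length_le, h.2.trans (hpre.drop p)⟩

lemma OccursAt.take_of_le {S : List α} {j k : ℕ} (hjk : j ≤ k) (h : OccursAt v (S.take k) p)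
    (hend : p + v.length ≤ j) : OccursAt v (S.take j) p := by
  have hlen : p + v.length ≤ (S.take j).length := by
    have := h.1; simp only [List.length_take] at this ⊢; omega
  refine ⟨hlen, List.prefix_of_prefix_length_le h.2 ((List.take_prefix_take_left hjk).drop p) ?_⟩
  rw [List.length_drop]
  omega

end OccursAt

def repeatedPrefixLengths (S : List α) (i : ℕ) : Set ℕ :=
  {ℓ | ∃ p q : ℕ, p < q ∧ OccursAt (S.take ℓ) (S.take i) p ∧ OccursAt (S.take ℓ) (S.take i) q}

namespace repeatedPrefixLengths

variable {S : List α} {i ℓ : ℕ}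

lemma lt_of_mem (h : ℓ ∈ repeatedPrefixLengths S i) : ℓ < i := by
  obtain ⟨p, q, hpq, -, hq⟩ := h
  have := hq.1
  simp only [List.length_take] at this
  omega

lemma bddAbove : BddAbove (repeatedPrefixLengths S i) :=
  ⟨i, fun _ h => (lt_of_mem h).le⟩

lemma zero_mem (hi : 1 ≤ i) (hiS : i ≤ S.length) : 0 ∈ repeatedPrefixLengths S i := by
  refine ⟨0, 1, Nat.zero_lt_one, ?_, ?_⟩ <;>
    exact ⟨by simp only [List.length_take]; omega, by simp⟩

lemma mono {j k : ℕ} (hjk : j ≤ k) : repeatedPrefixLengths S j ⊆ repeatedPrefixLengths S k :=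
  fun _ ⟨p, q, hpq, hp, hq⟩ => ⟨p, q, hpq, hp.take_mono hjk, hq.take_mono hjk⟩

lemma mem_of_occursAt {j k : ℕ} (hjk : j ≤ k) {p q : ℕ} (hpq : p < q)
    (hp : OccursAt (S.take ℓ) (S.take k) p) (hq : OccursAt (S.take ℓ) (S.take k) q)
    (hend : q + (S.take ℓ).length ≤ j) : ℓ ∈ repeatedPrefixLengths S j :=
  ⟨p, q, hpq, hp.take_of_le hjk (by omega), hq.take_of_le hjk hend⟩

lemma mem_of_succ_mem (h : ℓ + 1 ∈ repeatedPrefixLengths S (i + 1)) :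
    ℓ ∈ repeatedPrefixLengths S i := by
  obtain ⟨p, q, hpq, hp, hq⟩ := h
  have hpre : S.take ℓ <+: S.take (ℓ + 1) := List.take_prefix_take_left (Nat.le_succ ℓ)
  refine mem_of_occursAt (Nat.le_succ i) hpq (hp.of_prefix hpre) (hq.of_prefix hpre) ?_
  have := hq.1
  simp only [List.length_take] at this ⊢
  omega

end repeatedPrefixLengths

section Parr

open repeatedPrefixLengths

variable {S : List α} {i : ℕ}

lemma le_Parr {ℓ : ℕ} (h : ℓ ∈ repeatedPrefixLengths S i) : ℓ ≤ Parr S i :=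
  le_csSup bddAbove h

lemma Parr_one : Parr S 1 = 0 :=
  Nat.le_zero.mp (csSup_le' fun _ h => Nat.lt_one_iff.mp (lt_of_mem h) |>.le)

lemma Parr_mem (hi : 1 ≤ i) (hiS : i ≤ S.length) : Parr S i ∈ repeatedPrefixLengths S i :=
  Nat.sSup_mem ⟨0, zero_mem hi hiS⟩ bddAbove

lemma Parr_le_Parr_succ : Parr S i ≤ Parr S (i + 1) :=
  csSup_le_csSup' bddAbove (mono (Nat.le_succ i))

lemma Parr_succ_le (hiS : i + 1 ≤ S.length) : Parr S (i + 1) ≤ Parr S i + 1 := by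
  rcases Nat.eq_zero_or_eq_succ_pred (Parr S (i + 1)) with h | h
  · omega
  have hmem := Parr_mem (Nat.succ_pos i) hiS
  rw [h] at hmem ⊢
  exact Nat.succ_le_succ (le_Parr (mem_of_succ_mem hmem))

lemma Parr_lt_Parr_succ_of_isClosedWord (hi : 1 ≤ i) (hiS : i + 1 ≤ S.length)
    (hcl : IsClosedWord (S.take (i + 1))) : Parr S i < Parr S (i + 1) := by
  have hlenT : (S.take (i + 1)).length = i + 1 := by simp only [List.length_take]; omega
  obtain hone | ⟨β, ⟨hne, hpre, hsuf⟩, hinternal⟩ := hcl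
  · omega
  have hb : β.length < i + 1 := by
    have := hpre.length_le
    exact lt_of_le_of_ne (by omega) fun h => hne (hpre.eq_of_length (by omega))
  have hβ : β = S.take β.length := by
    rw [List.prefix_iff_eq_take.mp hpre, List.take_take, List.length_take]
    congr 1
    omega
  have hβ_mem : β.length ∈ repeatedPrefixLengths S (i + 1) := by
    refine ⟨0, (S.take (i + 1)).length - β.length, by omega, ?_, ?_⟩ <;> rw [← hβ]
    exacts [hpre.occursAt_zero, hsuf.occursAt]
  refine lt_of_lt_of_le ?_ (le_Parr hβ_mem)
  by_contra! hle
  obtain ⟨p, q, hpq, -, hq⟩ := Parr_mem hi (by omega : i ≤ S.length)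
  have hβq : OccursAt β (S.take (i + 1)) q := by
    rw [hβ]
    exact (hq.of_prefix (List.take_prefix_take_left hle)).take_mono (Nat.le_succ i)
  have := hq.1
  simp only [List.length_take] at this
  rcases hinternal q hβq with h | h <;> omega

lemma isClosedWord_of_Parr_lt_Parr_succ (hiS : i + 1 ≤ S.length)
    (hlt : Parr S i < Parr S (i + 1)) : IsClosedWord (S.take (i + 1)) := by
  set L := Parr S (i + 1)
  have hL_mem : L ∈ repeatedPrefixLengths S (i + 1) := Parr_mem (Nat.succ_pos i) hiS
  have hL : L < i + 1 := lt_of_mem hL_mem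
  have hlenT : (S.take (i + 1)).length = i + 1 := by simp only [List.length_take]; omega
  have hlenU : (S.take L).length = L := by simp only [List.length_take]; omega
  have no_pair_before_end : ∀ r s, r < s → OccursAt (S.take L) (S.take (i + 1)) r →
      OccursAt (S.take L) (S.take (i + 1)) s → s + L ≤ i → False := fun r s hrs hr hs hend =>
    absurd (le_Parr (mem_of_occursAt (Nat.le_succ i) hrs hr hs (by omega))) (by omega)
  obtain ⟨p, q, hpq, hp, hq⟩ := hL_mem
  have hq_end : q + L = i + 1 := by
    have := hq.1
    by_contra
    exact no_pair_before_end p q hpq hp hq (by omega)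
  have hpre : S.take L <+: S.take (i + 1) := List.take_prefix_take_left hL.le
  refine .inr ⟨S.take L, ⟨fun h => ?_, hpre, hq.isSuffix_of_add_length_eq (by omega)⟩, ?_⟩
  · have := congrArg List.length h
    omega
  · intro r hr
    have := hr.1
    by_contra! hinternal
    exact no_pair_before_end 0 r (by omega) hpre.occursAt_zero hr (by omega)

lemma Parr_succ (hi : 1 ≤ i) (hiS : i + 1 ≤ S.length) :
    Parr S (i + 1) = Parr S i + OCval S (i + 1) := by
  rw [OCval]
  split_ifs with hcl
  · have := Parr_lt_Parr_succ_of_isClosedWord hi hiS hcl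
    have := Parr_succ_le hiS
    omega
  · have := mt (isClosedWord_of_Parr_lt_Parr_succ hiS) hcl
    have : Parr S i ≤ Parr S (i + 1) := Parr_le_Parr_succ
    omega

end Parr

theorem statement_2_general {α : Type*} (S : List α) :
    Parr S 1 = 0 ∧
    ∀ i : ℕ, 1 < i → i ≤ S.length → Parr S i = Parr S (i - 1) + OCval S i := by
  refine ⟨Parr_one, fun i hi hiS => ?_⟩
  obtain ⟨j, rfl⟩ : ∃ j, i = j + 1 := ⟨i - 1, by omega⟩
  rw [Nat.add_sub_cancel]
  exact Parr_succ (by omega) hiS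

/-- `P[1] = 0` and for `1 < i ≤ n`, `P[i] = P[i−1] + OC[i]`. -/
theorem statement_2 {α : Type*} (S : List α) (hn : 1 ≤ S.length) :
    Parr S 1 = 0 ∧
    ∀ i : ℕ, 1 < i → i ≤ S.length → Parr S i = Parr S (i - 1) + OCval S i :=
  statement_2_general S
end

section
/- Let S be a string of length n and let 1 ≤ i ≤ n. If OC[i] = 1 (i.e., the prefix S[1..i] is closed), then B[i] = P[i]; moreover, if in addition i > 1, then B[i−1] = P[i−1]. -/
variable {α : Type*}

section Aux

/-- The set of lengths whose supremum defines `Parr`. -/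
def Pset (S : List α) (i : ℕ) : Set ℕ :=
  {ℓ | ∃ p q : ℕ, p < q ∧ OccursAt (S.take ℓ) (S.take i) p ∧
    OccursAt (S.take ℓ) (S.take i) q}

lemma parr_eq (S : List α) (i : ℕ) : Parr S i = sSup (Pset S i) := rfl

lemma barr_eq (S : List α) (i : ℕ) : Barr S i = sSup (Bord S i) := rfl

lemma take_length_eq (S : List α) {i : ℕ} (hin : i ≤ S.length) :
    (S.take i).length = i := by
  simp [List.length_take]; omega

lemma take_prefix_take (S : List α) {b ℓ : ℕ} (h : b ≤ ℓ) :
    S.take b <+: S.take ℓ := by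
  have : (S.take ℓ).take b = S.take b := by
    rw [List.take_take, min_eq_left h]
  rw [← this]; exact List.take_prefix _ _

lemma bord_lt {S : List α} {i ℓ : ℕ} (hin : i ≤ S.length) (h : ℓ ∈ Bord S i) :
    ℓ < i := by
  obtain ⟨hne, hpre, -⟩ := h
  have h1 : (S.take ℓ).length ≤ (S.take i).length := hpre.length_le
  have h2 : (S.take ℓ).length ≠ (S.take i).length :=
    fun he => hne (hpre.eq_of_length he)
  simp [List.length_take] at h1 h2; omega

lemma pset_lt {S : List α} {i ℓ : ℕ} (hin : i ≤ S.length) (h : ℓ ∈ Pset S i) :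
    ℓ < i := by
  obtain ⟨p, q, hpq, -, hq⟩ := h
  have h1 := hq.1
  simp [List.length_take] at h1
  omega

lemma zero_mem_bord {S : List α} {i : ℕ} (hi1 : 1 ≤ i) (hin : i ≤ S.length) :
    0 ∈ Bord S i := by
  refine ⟨?_, by simp, by simp⟩
  intro h
  have := take_length_eq S hin
  rw [← h] at this
  simp at this; omega

lemma zero_mem_pset {S : List α} {i : ℕ} (hi1 : 1 ≤ i) (hin : i ≤ S.length) :
    0 ∈ Pset S i := by
  refine ⟨0, 1, by omega, ⟨?_, by simp⟩, ⟨?_, by simp⟩⟩ <;>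
    simp [take_length_eq S hin] <;> omega

lemma bord_bdd {S : List α} {i : ℕ} (hin : i ≤ S.length) :
    BddAbove (Bord S i) := ⟨i, fun ℓ h => (bord_lt hin h).le⟩

lemma pset_bdd {S : List α} {i : ℕ} (hin : i ≤ S.length) :
    BddAbove (Pset S i) := ⟨i, fun ℓ h => (pset_lt hin h).le⟩

lemma le_barr {S : List α} {i ℓ : ℕ} (hin : i ≤ S.length) (h : ℓ ∈ Bord S i) :
    ℓ ≤ Barr S i := le_csSup (bord_bdd hin) h

lemma le_parr {S : List α} {i ℓ : ℕ} (hin : i ≤ S.length) (h : ℓ ∈ Pset S i) :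
    ℓ ≤ Parr S i := le_csSup (pset_bdd hin) h

lemma barr_mem {S : List α} {i : ℕ} (hi1 : 1 ≤ i) (hin : i ≤ S.length) :
    Barr S i ∈ Bord S i :=
  Nat.sSup_mem ⟨0, zero_mem_bord hi1 hin⟩ (bord_bdd hin)

lemma parr_mem {S : List α} {i : ℕ} (hi1 : 1 ≤ i) (hin : i ≤ S.length) :
    Parr S i ∈ Pset S i :=
  Nat.sSup_mem ⟨0, zero_mem_pset hi1 hin⟩ (pset_bdd hin)

lemma occ_of_suffix {v T : List α} (h : v <:+ T) :
    OccursAt v T (T.length - v.length) := by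
  obtain ⟨t, rfl⟩ := h
  have ht : (t ++ v).length - v.length = t.length := by simp
  refine ⟨by simp, ?_⟩
  rw [ht, List.drop_left]

lemma suffix_of_occ_end {v T : List α} {q : ℕ} (h : OccursAt v T q)
    (he : q + v.length = T.length) : v <:+ T := by
  have h1 : v = T.drop q := h.2.eq_of_length (by simp [List.length_drop]; omega)
  rw [h1]; exact List.drop_suffix q T

lemma occ_mono {S : List α} {j i r : ℕ} (hji : j ≤ i) {v : List α}
    (h : OccursAt v (S.take j) r) : OccursAt v (S.take i) r := by
  have hpre : S.take j <+: S.take i := take_prefix_take S hji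
  exact ⟨le_trans h.1 hpre.length_le, h.2.trans (hpre.drop r)⟩

lemma barr_le_parr {S : List α} {i : ℕ} (hi1 : 1 ≤ i) (hin : i ≤ S.length) :
    Barr S i ≤ Parr S i := by
  have hB := barr_mem hi1 hin
  set B := Barr S i with hBdef
  have hBlt : B < i := bord_lt hin hB
  apply le_parr hin
  have hlen : (S.take B).length = B := by simp [List.length_take]; omega
  refine ⟨0, i - B, by omega, ⟨?_, by simpa using hB.2.1⟩, ?_⟩
  · rw [take_length_eq S hin]; omega
  · have := occ_of_suffix hB.2.2
    rwa [take_length_eq S hin, hlen] at this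

lemma parr_le_barr_of_closed {S : List α} {i : ℕ} (hi1 : 1 ≤ i)
    (hin : i ≤ S.length) (hc : IsClosedWord (S.take i)) :
    Parr S i ≤ Barr S i := by
  obtain ⟨p, q, hpq, hp, hq⟩ := parr_mem hi1 hin
  set ℓ := Parr S i with hℓdef
  have hℓ : ℓ < i := pset_lt hin ⟨p, q, hpq, hp, hq⟩
  have hlen : (S.take ℓ).length = ℓ := by simp [List.length_take]; omega
  have hTlen := take_length_eq S hin
  have hqi : q + ℓ ≤ i := by have := hq.1; rw [hlen, hTlen] at this; exact this
  rcases eq_or_lt_of_le hqi with hend | hend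
  · -- the prefix is a suffix: it is a border
    apply le_barr hin
    refine ⟨?_, take_prefix_take S hℓ.le, suffix_of_occ_end hq (by omega)⟩
    intro h
    have := congrArg List.length h
    rw [hlen, hTlen] at this; omega
  · rcases hc with h1 | ⟨β, hβ, hocc⟩
    · rw [hTlen] at h1; omega
    · by_contra hcon
      push_neg at hcon
      have hβpre := hβ.2.1
      have hb : β = S.take β.length := by
        have h2 : β = (S.take i).take β.length := List.prefix_iff_eq_take.mp hβpre
        rw [List.take_take] at h2
        have hble : β.length ≤ i := by
          have := hβpre.length_le; rwa [hTlen] at this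
        rwa [min_eq_left hble] at h2
      have hbmem : β.length ∈ Bord S i := by
        show IsBorder (S.take β.length) (S.take i)
        rw [← hb]; exact hβ
      have hbl : β.length < ℓ := lt_of_le_of_lt (le_barr hin hbmem) hcon
      have hoccq : OccursAt β (S.take i) q := by
        refine ⟨?_, ?_⟩
        · rw [hTlen]; omega
        · refine List.IsPrefix.trans ?_ hq.2
          rw [hb]; exact take_prefix_take S hbl.le
      rcases hocc q hoccq with h0 | hend'
      · omega
      · rw [hTlen] at hend'
        have hbi : β.length < i := bord_lt hin hbmem
        omega

lemma barr_pred_mem {S : List α} {i : ℕ} (hi2 : 2 ≤ i) (hin : i ≤ S.length)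
    (hB1 : 1 ≤ Barr S i) : Barr S i - 1 ∈ Bord S (i - 1) := by
  have hB := barr_mem (by omega) hin
  set B := Barr S i with hBdef
  have hBlt : B < i := bord_lt hin hB
  obtain ⟨t, ht⟩ := hB.2.2
  have hlenB : (S.take B).length = B := by simp [List.length_take]; omega
  have hTlen := take_length_eq S hin
  have htlen : t.length = i - B := by
    have := congrArg List.length ht
    simp [hlenB, hTlen] at this; omega
  have hsuf : S.take (B - 1) <:+ S.take (i - 1) := by
    refine ⟨t, ?_⟩
    have h1 : S.take (i - 1) = (S.take i).take (i - 1) := by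
      rw [List.take_take, min_eq_left (by omega)]
    have h2 : t.take (i - 1) = t := List.take_of_length_le (by omega)
    have h3 : (S.take B).take (i - 1 - t.length) = S.take (B - 1) := by
      rw [List.take_take]
      congr 1
      omega
    rw [h1, ← ht, List.take_append, h2, h3]
  refine ⟨?_, take_prefix_take S (by omega), hsuf⟩
  intro h
  have := congrArg List.length h
  simp [List.length_take] at this; omega

lemma parr_pred_le_barr_pred {S : List α} {i : ℕ} (hi2 : 2 ≤ i)
    (hin : i ≤ S.length) (hc : IsClosedWord (S.take i)) :
    Parr S (i - 1) ≤ Barr S (i - 1) := by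
  have hj1 : 1 ≤ i - 1 := by omega
  have hjn : i - 1 ≤ S.length := by omega
  obtain ⟨p, q, hpq, hp, hq⟩ := parr_mem hj1 hjn
  set ℓ := Parr S (i - 1) with hℓdef
  have hℓ : ℓ < i - 1 := pset_lt hjn ⟨p, q, hpq, hp, hq⟩
  have hlen : (S.take ℓ).length = ℓ := by simp [List.length_take]; omega
  have hT'len := take_length_eq S hjn
  have hTlen := take_length_eq S hin
  have hqj : q + ℓ ≤ i - 1 := by
    have := hq.1; rw [hlen, hT'len] at this; exact this
  rcases eq_or_lt_of_le hqj with hend | hend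
  · apply le_barr hjn
    refine ⟨?_, take_prefix_take S hℓ.le, suffix_of_occ_end hq (by omega)⟩
    intro h
    have := congrArg List.length h
    rw [hlen, hT'len] at this; omega
  · -- internal occurrence inside S.take (i-1)
    have hℓPi : ℓ ∈ Pset S i :=
      ⟨p, q, hpq, occ_mono (by omega) hp, occ_mono (by omega) hq⟩
    have hℓB : ℓ ≤ Barr S i :=
      le_trans (le_parr hin hℓPi) (parr_le_barr_of_closed (by omega) hin hc)
    by_contra hcon
    push_neg at hcon
    have hB1 : 1 ≤ Barr S i := by omega
    have hBm1 : Barr S i - 1 ≤ Barr S (i - 1) :=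
      le_barr hjn (barr_pred_mem hi2 hin hB1)
    have hℓeq : ℓ = Barr S i := by omega
    rcases hc with h1 | ⟨β, hβ, hocc⟩
    · rw [hTlen] at h1; omega
    · have hβpre := hβ.2.1
      have hb : β = S.take β.length := by
        have h2 : β = (S.take i).take β.length := List.prefix_iff_eq_take.mp hβpre
        rw [List.take_take] at h2
        have hble : β.length ≤ i := by
          have := hβpre.length_le; rwa [hTlen] at this
        rwa [min_eq_left hble] at h2
      have hbmem : β.length ∈ Bord S i := by
        show IsBorder (S.take β.length) (S.take i)
        rw [← hb]; exact hβ
      have hbl : β.length ≤ ℓ := hℓeq ▸ le_barr hin hbmem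
      have hoccq : OccursAt β (S.take i) q := by
        refine ⟨?_, ?_⟩
        · rw [hTlen]; omega
        · refine List.IsPrefix.trans ?_ ((occ_mono (by omega) hq).2)
          rw [hb]; exact take_prefix_take S hbl
      rcases hocc q hoccq with h0 | hend'
      · omega
      · rw [hTlen] at hend'
        have hbi : β.length < i := bord_lt hin hbmem
        omega

end Aux

/-- If `OC[i] = 1` then `B[i] = P[i]`; if moreover `i > 1`
then `B[i−1] = P[i−1]`. -/
theorem statement_3 {α : Type*} (S : List α) (i : ℕ)
    (hi1 : 1 ≤ i) (hin : i ≤ S.length) (hoc : OCval S i = 1) :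
    Barr S i = Parr S i ∧ (1 < i → Barr S (i - 1) = Parr S (i - 1)) := by
  have hc : IsClosedWord (S.take i) := by
    by_contra h
    simp [OCval, h] at hoc
  refine ⟨le_antisymm (barr_le_parr hi1 hin) (parr_le_barr_of_closed hi1 hin hc),
    fun hi2 => le_antisymm (barr_le_parr (by omega) (by omega))
      (parr_pred_le_barr_pred (by omega) hin hc)⟩
end

section
/- Let S be a string of length n ≥ 1 and let m be the number of maximal blocks of consecutive 1s (runs of 1s) in the OC array of S. Then m ≤ 2·√n + 2; in particular, the number of runs in the OC array of a string of length n is O(√n). -/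
variable {α : Type*}

/-!
A prefix `S[0, i)` is closed exactly when it has a border `S[0, b)` whose only occurrences in
it are at `0` and at `i - b`; call `q = i - b` its period. Border lengths of closed prefixes
strictly increase with `i`. If `S[0, i')` starts a run of `1`s, then `S[0, i' - 1)` is not closed, so its
border `S[0, b' - 1)` has an internal occurrence at some `p`, which cannot be extended by one
letter; it lies between the period of any earlier closed prefix and the period `i' - b'`.
Comparing this occurrence with the borders of the next run start shows that for three
consecutive run starts the periods satisfy `q₁ + b₂ ≤ q₃`. As `b_k ≥ k`, the periods grow
quadratically, `(k - 1)² ≤ 4 q_k`, and `q_m ≤ n` gives `(m - 2)² ≤ 4 n`.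
-/

def PrefixOccursAt (S : List α) (b p : ℕ) : Prop :=
  ∀ j < b, S[p + j]? = S[j]?

theorem PrefixOccursAt.mono {S : List α} {b c p : ℕ} (h : PrefixOccursAt S b p) (hcb : c ≤ b) :
    PrefixOccursAt S c p :=
  fun j hj => h j (by omega)

theorem prefixOccursAt_succ_iff {S : List α} {b p : ℕ} :
    PrefixOccursAt S (b + 1) p ↔ PrefixOccursAt S b p ∧ S[p + b]? = S[b]? := by
  simp only [PrefixOccursAt, Nat.forall_lt_succ_right]

theorem PrefixOccursAt.sub {S : List α} {b c q r : ℕ} (hq : PrefixOccursAt S b q)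
    (hr : PrefixOccursAt S c r) (hqr : q ≤ r) (hrc : r + c ≤ q + b) :
    PrefixOccursAt S c (r - q) := fun j hj => by
  rw [← hr j hj, ← hq _ (by omega), show q + (r - q + j) = r + j by omega]

/-- If `q - p < c`, the occurrences at `p` and `q` together with the border `S[0, c)` of
`S[0, b)` would extend the occurrence at `p` by the letter `S[b - 1]`. -/
theorem PrefixOccursAt.add_le_of_mismatch {S : List α} {b c p q : ℕ}
    (hq : PrefixOccursAt S b q) (hp : PrefixOccursAt S (b - 1) p)
    (hne : S[p + (b - 1)]? ≠ S[b - 1]?) (hpq : p ≤ q) (hcb : c < b)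
    (hc : PrefixOccursAt S c (b - c)) : c + p ≤ q := by
  by_contra! hlt
  obtain ⟨t, rfl⟩ : ∃ t, q = p + t := ⟨q - p, by omega⟩
  refine hne ?_
  have idx : ∀ {x y : ℕ}, x = y → S[x]? = S[y]? := fun h => h ▸ rfl
  calc S[p + (b - 1)]?
      = S[p + t + (b - 1 - t)]? := idx (by omega)
    _ = S[b - 1 - t]? := hq _ (by omega)
    _ = S[b - c + (c - 1 - t)]? := idx (by omega)
    _ = S[c - 1 - t]? := hc _ (by omega)
    _ = S[p + t + (c - 1 - t)]? := (hq _ (by omega)).symm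
    _ = S[p + (c - 1)]? := idx (by omega)
    _ = S[c - 1]? := hp _ (by omega)
    _ = S[b - c + (c - 1)]? := (hc _ (by omega)).symm
    _ = S[b - 1]? := idx (by omega)

theorem length_take_sub_length_take {S : List α} {b i : ℕ} (hbi : b ≤ i) (hi : i ≤ S.length) :
    (S.take i).length - (S.take b).length = i - b := by
  simp only [List.length_take]
  omega

theorem occursAt_take_iff {S : List α} {b i p : ℕ} (hbi : b ≤ i) (hi : i ≤ S.length) :
    OccursAt (S.take b) (S.take i) p ↔ p + b ≤ i ∧ PrefixOccursAt S b p := by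
  simp only [OccursAt, List.length_take, PrefixOccursAt, List.prefix_iff_getElem?,
    List.getElem?_drop, List.getElem?_take, List.getElem_take, min_eq_left hi,
    min_eq_left (hbi.trans hi)]
  refine and_congr_right fun hpb => forall₂_congr fun j hj => ?_
  rw [if_pos (by omega), List.getElem?_eq_getElem (by omega : j < S.length)]

theorem isSuffix_iff_occursAt {l₁ l₂ : List α} :
    l₁ <:+ l₂ ↔ OccursAt l₁ l₂ (l₂.length - l₁.length) := by
  constructor
  · intro h
    refine ⟨by have := h.length_le; omega, ?_⟩
    rw [← List.suffix_iff_eq_drop.1 h]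
  · rintro ⟨hlen, h⟩
    rw [List.suffix_iff_eq_drop]
    exact h.eq_of_length (by simp only [List.length_drop]; omega)

theorem isBorder_take_iff {S : List α} {b i : ℕ} (hbi : b < i) (hi : i ≤ S.length) :
    IsBorder (S.take b) (S.take i) ↔ PrefixOccursAt S b (i - b) := by
  rw [IsBorder, isSuffix_iff_occursAt, length_take_sub_length_take hbi.le hi,
    occursAt_take_iff hbi.le hi]
  refine ⟨fun h => h.2.2.2, fun h => ⟨fun he => ?_, List.take_prefix_take_left hbi.le, by omega, h⟩⟩
  have := congrArg List.length he
  simp only [List.length_take] at this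
  omega

def IsClosingBorder (S : List α) (b i : ℕ) : Prop :=
  b < i ∧ i ≤ S.length ∧ PrefixOccursAt S b (i - b) ∧
    ∀ p, p + b ≤ i → PrefixOccursAt S b p → p = 0 ∨ p = i - b

theorem isClosedWord_take_iff {S : List α} {i : ℕ} (hi0 : 0 < i) (hi : i ≤ S.length) :
    IsClosedWord (S.take i) ↔ ∃ b, IsClosingBorder S b i := by
  constructor
  · rintro (hlen | ⟨β, hβ, hocc⟩)
    · simp only [List.length_take] at hlen
      exact ⟨0, by omega, hi, fun _ h => absurd h (Nat.not_lt_zero _), fun p _ _ => by omega⟩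
    · have hpre := List.prefix_take_iff.1 hβ.2.1
      obtain ⟨b, rfl, hb⟩ : ∃ b, β = S.take b ∧ b = β.length :=
        ⟨β.length, List.prefix_iff_eq_take.1 hpre.1, rfl⟩
      have hbi : b < i := lt_of_le_of_ne (hb ▸ hpre.2) fun hbi => hβ.1 (hbi ▸ rfl)
      refine ⟨b, hbi, hi, (isBorder_take_iff hbi hi).1 hβ, fun p hp hpb => ?_⟩
      rw [← length_take_sub_length_take hbi.le hi]
      exact hocc p ((occursAt_take_iff hbi.le hi).2 ⟨hp, hpb⟩)
  · rintro ⟨b, hbi, -, hbord, huniq⟩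
    refine Or.inr ⟨S.take b, (isBorder_take_iff hbi hi).2 hbord, fun p hp => ?_⟩
    obtain ⟨hpb, hocc⟩ := (occursAt_take_iff hbi.le hi).1 hp
    rw [length_take_sub_length_take hbi.le hi]
    exact huniq p hpb hocc

namespace IsClosingBorder

variable {S : List α} {b i b' i' : ℕ}

theorem period_le (h : IsClosingBorder S b i) {m p : ℕ} (hbm : b ≤ m)
    (hp : PrefixOccursAt S m p) (hp0 : 0 < p) : i - b ≤ p := by
  by_contra! hlt
  have := h.2.2.2 p (by omega) (hp.mono hbm)
  omega

theorem lt_of_lt (h : IsClosingBorder S b i) (h' : IsClosingBorder S b' i') (hii : i < i') :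
    b < b' := by
  by_contra! hle
  have := h'.period_le hle h.2.2.1 (by have := h.1; omega)
  have := h'.1
  omega

theorem exists_internal_occurrence (h : IsClosingBorder S b i) (h' : IsClosingBorder S b' i')
    (hii : i < i') (hnc : ¬ IsClosedWord (S.take (i' - 1))) :
    ∃ p, i - b ≤ p ∧ p < i' - b' ∧ PrefixOccursAt S (b' - 1) p ∧
      S[p + (b' - 1)]? ≠ S[b' - 1]? := by
  have hbb := h.lt_of_lt h' hii
  obtain ⟨hbi', hi', hbord', huniq'⟩ := h'
  obtain ⟨p, hp, hocc, hpne⟩ : ∃ p, p + (b' - 1) ≤ i' - 1 ∧ PrefixOccursAt S (b' - 1) p ∧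
      ¬ (p = 0 ∨ p = i' - 1 - (b' - 1)) := by
    by_contra! hcon
    refine hnc ((isClosedWord_take_iff (by omega) (by omega)).2
      ⟨b' - 1, by omega, by omega, ?_, hcon⟩)
    rw [show i' - 1 - (b' - 1) = i' - b' by omega]
    exact hbord'.mono (by omega)
  refine ⟨p, h.period_le (by omega) hocc (by omega), by omega, hocc, fun heq => hpne ?_⟩
  have hext := prefixOccursAt_succ_iff.2 ⟨hocc, heq⟩
  rw [Nat.sub_add_cancel (by omega)] at hext
  have := huniq' p (by omega) hext
  omega

/-- If `i₂ ≤ i₃ - b₃` this follows from `i₁ - b₁ ≤ p₂ < i₂ - b₂`; otherwise the borders of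
`S[0, i₂)` and `S[0, i₃)` overlap in a border of `S[0, b₂)` of length `i₂ - (i₃ - b₃)`. -/
theorem period_add_le_period {b₁ i₁ b₂ i₂ b₃ i₃ : ℕ} (h₁ : IsClosingBorder S b₁ i₁)
    (h₂ : IsClosingBorder S b₂ i₂) (h₃ : IsClosingBorder S b₃ i₃) (h₁₂ : i₁ < i₂)
    (h₂₃ : i₂ < i₃) (hnc₂ : ¬ IsClosedWord (S.take (i₂ - 1)))
    (hnc₃ : ¬ IsClosedWord (S.take (i₃ - 1))) :
    (i₁ - b₁) + b₂ ≤ i₃ - b₃ := by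
  obtain ⟨p₂, hq₁p₂, hp₂q₂, hocc₂, hne₂⟩ := h₁.exists_internal_occurrence h₂ h₁₂ hnc₂
  obtain ⟨p₃, hq₂p₃, hp₃q₃, -, -⟩ := h₂.exists_internal_occurrence h₃ h₂₃ hnc₃
  have hb₂ := h₂.1
  have hb₂₃ := h₂.lt_of_lt h₃ h₂₃
  by_cases hi₂ : i₂ ≤ i₃ - b₃
  · omega
  have hborder : PrefixOccursAt S (i₂ - (i₃ - b₃)) (b₂ - (i₂ - (i₃ - b₃))) := by
    have := h₂.2.2.1.sub (h₃.2.2.1.mono (c := i₂ - (i₃ - b₃)) (by omega)) (by omega) (by omega)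
    rwa [show i₃ - b₃ - (i₂ - b₂) = b₂ - (i₂ - (i₃ - b₃)) by omega] at this
  have := h₂.2.2.1.add_le_of_mismatch hocc₂ hne₂ (by omega) (by omega) hborder
  omega

end IsClosingBorder

theorem sub_one_sq_le_of_growth {m : ℕ} {b q : ℕ → ℕ}
    (hb : ∀ k, k + 1 < m → b k < b (k + 1))
    (hq : ∀ k, k + 2 < m → q k + b (k + 1) ≤ q (k + 2)) {k : ℕ} (hk : k < m) :
    (k - 1) ^ 2 ≤ 4 * q k := by
  have hbk : ∀ k < m, k ≤ b k := by
    intro k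
    induction k with
    | zero => simp
    | succ k ih => intro hk; have := ih (by omega); have := hb k hk; omega
  induction k using Nat.twoStepInduction with
  | zero => simp
  | one => simp
  | more k ih _ =>
    have hqk := ih (by omega)
    have hstep := hq k hk
    have hbk₁ := hbk (k + 1) (by omega)
    rcases k with _ | k
    · omega
    · rw [show k + 1 + 2 - 1 = k + 2 by omega]
      rw [Nat.add_sub_cancel] at hqk
      nlinarith

theorem ocVal_eq_one_iff {S : List α} {i : ℕ} : OCval S i = 1 ↔ IsClosedWord (S.take i) := by
  unfold OCval; split_ifs <;> simp_all

theorem ocVal_eq_zero_iff {S : List α} {i : ℕ} : OCval S i = 0 ↔ ¬ IsClosedWord (S.take i) := by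
  unfold OCval; split_ifs <;> simp_all

theorem sq_ocRuns_sub_two_le (S : List α) : (ocRuns S - 2) ^ 2 ≤ 4 * S.length := by
  set R := (Finset.Icc 1 S.length).filter
    (fun i => OCval S i = 1 ∧ (i = 1 ∨ OCval S (i - 1) = 0))
  have hm : ocRuns S = R.card := rfl
  rcases Nat.eq_zero_or_pos R.card with h0 | hpos
  · simp [hm, h0]
  set I := Nat.nth (· ∈ R)
  have hIR : ∀ {k}, k < R.card → I k ∈ R := fun hk =>
    Nat.nth_mem_of_lt_card R.finite_toSet (by simpa using hk)
  have hImono : ∀ {k l}, k < l → l < R.card → I k < I l := fun hkl hl =>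
    Nat.nth_lt_nth_of_lt_card R.finite_toSet hkl (by simpa using hl)
  have hIS : ∀ {k}, k < R.card → 0 < I k ∧ I k ≤ S.length := fun hk => by
    have := (Finset.mem_filter.1 (hIR hk)).1
    simp only [Finset.mem_Icc] at this
    omega
  have hnc : ∀ {k}, 0 < k → k < R.card → ¬ IsClosedWord (S.take (I k - 1)) := fun hk0 hk => by
    have := (hIS hpos).1
    have := hImono hk0 hk
    rcases (Finset.mem_filter.1 (hIR hk)).2.2 with h | h
    · omega
    · exact ocVal_eq_zero_iff.1 h
  have hB : ∀ k, ∃ b, k < R.card → IsClosingBorder S b (I k) := fun k => by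
    by_cases hk : k < R.card
    · obtain ⟨b, hb⟩ := (isClosedWord_take_iff (hIS hk).1 (hIS hk).2).1
        (ocVal_eq_one_iff.1 (Finset.mem_filter.1 (hIR hk)).2.1)
      exact ⟨b, fun _ => hb⟩
    · exact ⟨0, fun h => absurd h hk⟩
  choose B hB using hB
  have hgrowth := sub_one_sq_le_of_growth (b := B) (q := fun k => I k - B k)
    (fun k hk => (hB k (by omega)).lt_of_lt (hB (k + 1) hk) (hImono (by omega) hk))
    (fun k hk => (hB k (by omega)).period_add_le_period (hB (k + 1) (by omega)) (hB (k + 2) hk)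
      (hImono (by omega) (by omega)) (hImono (by omega) hk) (hnc (by omega) (by omega))
      (hnc (by omega) hk))
    (show R.card - 1 < R.card by omega)
  have hlast := (hIS (show R.card - 1 < R.card by omega)).2
  rw [hm, show R.card - 2 = R.card - 1 - 1 by omega]
  omega

theorem statement_10_general {α : Type*} (S : List α) :
    (ocRuns S : ℝ) ≤ 2 * Real.sqrt (S.length : ℝ) + 2 := by
  have hperiod : ((ocRuns S - 2 : ℕ) : ℝ) ≤ 2 * Real.sqrt (S.length : ℝ) := by
    refine le_of_pow_le_pow_left₀ two_ne_zero (by positivity) ?_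
    rw [mul_pow, Real.sq_sqrt (Nat.cast_nonneg _)]
    exact_mod_cast sq_ocRuns_sub_two_le S
  have hm : (ocRuns S : ℝ) ≤ ((ocRuns S - 2 : ℕ) : ℝ) + 2 := by
    exact_mod_cast (by omega : ocRuns S ≤ ocRuns S - 2 + 2)
  linarith

/-- The number `m` of runs of `1`s in the OC array of a string of
length `n ≥ 1` satisfies `m ≤ 2·√n + 2`. -/
theorem statement_10 {α : Type*} (S : List α) (hn : 1 ≤ S.length) :
    (ocRuns S : ℝ) ≤ 2 * Real.sqrt (S.length : ℝ) + 2 :=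
  statement_10_general S
end
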